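/- Let A be a semistandard Young tableau of shape λ with entries in {1,…,m} and ℓ(λ') ≤ p, let D_λ be the tableau of shape λ with D_λ(k,l) = l, and let C ∈ 𝕋_A be an A-restricted tableau. If θ_{AC} ⊗ e_C = ε · θ_{A D_λ} ⊗ e_{D_λ} for some sign ε ∈ {+1, -1}, then C = D_λ. -/

import Mathlib

open scoped TensorProduct
open scoped Classical

noncomputable section

abbrev Lam (m p : ℕ) : Type := ExteriorAlgebra ℂ (Fin m × Fin p → ℂ)

def Qcl (p : ℕ) : QuadraticForm ℂ (Fin p → ℂ) :=
  QuadraticMap.weightedSumSquares ℂ (fun _ : Fin p => (1 : ℂ))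

abbrev Cl (p : ℕ) : Type := CliffordAlgebra (Qcl p)

abbrev Bsp (m p : ℕ) : Type := Lam m p ⊗[ℂ] Cl p

def θv (m p : ℕ) (i : Fin m) (α : Fin p) : Lam m p :=
  ExteriorAlgebra.ι ℂ (Pi.single (i, α) 1)

def ev (p : ℕ) (α : Fin p) : Cl p :=
  CliffordAlgebra.ι (Qcl p) (Pi.single α 1)

def gDer (m p : ℕ) (i : Fin m) (α : Fin p) : Lam m p →ₗ[ℂ] Lam m p :=
  CliffordAlgebra.contractLeft (Q := (0 : QuadraticForm ℂ (Fin m × Fin p → ℂ)))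
    (LinearMap.proj (i, α))

def ThetaOp (m p : ℕ) (i : Fin m) : Module.End ℂ (Bsp m p) :=
  ∑ α : Fin p,
    TensorProduct.map (LinearMap.mulLeft ℂ (θv m p i α)) (LinearMap.mulLeft ℂ (ev p α))

def DOp (m p : ℕ) (i : Fin m) : Module.End ℂ (Bsp m p) :=
  ∑ α : Fin p,
    TensorProduct.map (gDer m p i α) (LinearMap.mulLeft ℂ (ev p α))

def hOp (m p : ℕ) (i : Fin m) : Module.End ℂ (Bsp m p) :=
  (-(1/2 : ℂ)) • ⁅DOp m p i, ThetaOp m p i⁆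

def oneB (m p : ℕ) : Bsp m p := (1 : Lam m p) ⊗ₜ[ℂ] (1 : Cl p)

def Pmod (m p : ℕ) : Submodule ℂ (Bsp m p) :=
  Submodule.span ℂ {v | ∃ l : List (Fin m), v = ((l.map (ThetaOp m p)).prod) (oneB m p)}

def thetaMon (m p : ℕ) (γ : Matrix (Fin m) (Fin p) (ZMod 2)) : Lam m p :=
  ((List.finRange p).map (fun α =>
    ((List.finRange m).map (fun i => if γ i α = 0 then 1 else θv m p i α)).prod)).prod

def eMon (p : ℕ) (η : Fin p → ZMod 2) : Cl p :=
  ((List.finRange p).map (fun α => if η α = 0 then 1 else ev p α)).prod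

/-! ### Young tableaux -/

/-- The number of rows `ℓ(λ)` of a Young diagram (the length of its first column). -/
def nRows (Y : YoungDiagram) : ℕ := Y.colLen 0

/-- `A : ℕ → ℕ → ℕ` is a semistandard filling of the Young diagram `Y` (with 0-based
entries): entries weakly increase along rows and strictly increase down columns. -/
def IsSSYT (Y : YoungDiagram) (A : ℕ → ℕ → ℕ) : Prop :=
  (∀ k l l', (k, l') ∈ Y → l ≤ l' → A k l ≤ A k l') ∧
  (∀ k k' l, (k', l) ∈ Y → k < k' → A k l < A k' l)

/-- All entries of the filling `A` of `Y` lie in `{0, …, m-1}` (representing `{1, …, m}`). -/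
def EntriesBelow (Y : YoungDiagram) (A : ℕ → ℕ → ℕ) (m : ℕ) : Prop :=
  ∀ c ∈ Y.cells, A c.1 c.2 < m

/-- The filling `C` of `Y` is row distinct: entries within each row are pairwise distinct. -/
def RowDistinct (Y : YoungDiagram) (C : ℕ → ℕ → ℕ) : Prop :=
  ∀ k l l', (k, l) ∈ Y → (k, l') ∈ Y → l ≠ l' → C k l ≠ C k l'

/-- `C` is an `A`-restricted tableau (entries of `C` in `{0,…,p-1}`). -/
def IsARestricted (p : ℕ) (Y : YoungDiagram) (A C : ℕ → ℕ → ℕ) : Prop :=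
  RowDistinct Y C ∧ EntriesBelow Y C p ∧
  (∀ k l k' l', (k, l) ∈ Y → (k', l') ∈ Y → (k, l) ≠ (k', l') →
      A k l = A k' l' → C k l ≠ C k' l') ∧
  (∀ k l l', (k, l') ∈ Y → l < l' → A k l = A k l' → C k l < C k l')

/-- `θ_{iα}` with natural-number indices (junk value `0` out of range). -/
def thetaN (m p : ℕ) (i α : ℕ) : Lam m p :=
  if h : i < m ∧ α < p then θv m p ⟨i, h.1⟩ ⟨α, h.2⟩ else 0

/-- `e_α` with a natural-number index (junk value `0` out of range). -/
def eNat (p : ℕ) (α : ℕ) : Cl p := if h : α < p then ev p ⟨α, h⟩ else 0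

/-- `Θ_i` with a natural-number index (junk value `0` out of range). -/
def ThetaN (m p : ℕ) (i : ℕ) : Module.End ℂ (Bsp m p) :=
  if h : i < m then ThetaOp m p ⟨i, h⟩ else 0

/-- The monomial `θ_{AC} = Π→_k θ_{A(k,1),C(k,1)} ⋯ θ_{A(k,λ_k),C(k,λ_k)} ∈ Λ`,
the product being taken row by row from the first row to the last. -/
def thetaTab (m p : ℕ) (Y : YoungDiagram) (A C : ℕ → ℕ → ℕ) : Lam m p :=
  ((List.range (nRows Y)).map (fun k =>
    ((List.range (Y.rowLen k)).map (fun l => thetaN m p (A k l) (C k l))).prod)).prod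

/-- The monomial `e_C = Π→_k e_{C(k,1)} ⋯ e_{C(k,λ_k)} ∈ Cℓ_p`. -/
def eTab (p : ℕ) (Y : YoungDiagram) (C : ℕ → ℕ → ℕ) : Cl p :=
  ((List.range (nRows Y)).map (fun k =>
    ((List.range (Y.rowLen k)).map (fun l => eNat p (C k l))).prod)).prod

/-- The operator `Θ_A = (Θ_{A(1,1)}⋯Θ_{A(1,λ₁)}) ⋯ (Θ_{A(ℓ,1)}⋯Θ_{A(ℓ,λ_ℓ)})`. -/
def ThetaTab (m p : ℕ) (Y : YoungDiagram) (A : ℕ → ℕ → ℕ) : Module.End ℂ (Bsp m p) :=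
  ((List.range (nRows Y)).map (fun k =>
    ((List.range (Y.rowLen k)).map (fun l => ThetaN m p (A k l))).prod)).prod

/-- The Young subgroup `S_λ = S_{λ₁} × ⋯ × S_{λ_ℓ}` of row permutations of `Y`. -/
abbrev YoungPerm (Y : YoungDiagram) : Type :=
  ∀ k : Fin (nRows Y), Equiv.Perm (Fin (Y.rowLen k))

/-- The row-permuted tableau `A^τ(k,l) = A(k, τ_k(l))`. -/
def permuteTab (Y : YoungDiagram) (A : ℕ → ℕ → ℕ) (τ : YoungPerm Y) : ℕ → ℕ → ℕ :=
  fun k l =>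
    if h : k < nRows Y ∧ l < Y.rowLen k then A k ((τ ⟨k, h.1⟩) ⟨l, h.2⟩ : ℕ) else A k l

/-- The number of entries equal to `i` in row `k` of the filling `A` of `Y`. -/
def rowCount (Y : YoungDiagram) (A : ℕ → ℕ → ℕ) (i k : ℕ) : ℕ :=
  ((List.range (Y.rowLen k)).filter (fun l => A k l = i)).length

/-- The factorial `A! = λ₁!⋯λ_ℓ! · Π_i Π_k (#{i's in row k of A})!`. -/
def tabFactorial (m : ℕ) (Y : YoungDiagram) (A : ℕ → ℕ → ℕ) : ℕ :=
  (∏ k ∈ Finset.range (nRows Y), (Y.rowLen k).factorial) *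
  ∏ i ∈ Finset.range m, ∏ k ∈ Finset.range (nRows Y), (rowCount Y A i k).factorial

/-- The vector `ω_A = (1/A!) Σ_{τ ∈ S_λ} Θ_{A^τ}(1 ⊗ 1) ∈ B`. -/
def omegaA (m p : ℕ) (Y : YoungDiagram) (A : ℕ → ℕ → ℕ) : Bsp m p :=
  ((tabFactorial m Y A : ℂ))⁻¹ •
    ∑ τ : YoungPerm Y, (ThetaTab m p Y (permuteTab Y A τ)) (oneB m p)

/-- The symmetrized operator `Σ_{τ ∈ S_λ} Θ_{A^τ}`. -/
def symThetaTab (m p : ℕ) (Y : YoungDiagram) (A : ℕ → ℕ → ℕ) : Module.End ℂ (Bsp m p) :=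
  ∑ τ : YoungPerm Y, ThetaTab m p Y (permuteTab Y A τ)

/-- The number of entries equal to `i` in column `α` of the filling `A` of `Y`. -/
def colCount (Y : YoungDiagram) (A : ℕ → ℕ → ℕ) (i α : ℕ) : ℕ :=
  ((List.range (Y.colLen α)).filter (fun k => A k α = i)).length

/-- The matrix `γ_A ∈ M_{m×p}(ℤ₂)`: `(γ_A)_{iα} = #{i's in column α of A} (mod 2)`. -/
def gammaA (m p : ℕ) (Y : YoungDiagram) (A : ℕ → ℕ → ℕ) : Matrix (Fin m) (Fin p) (ZMod 2) :=
  Matrix.of fun i α => ((colCount Y A (i : ℕ) (α : ℕ) : ℕ) : ZMod 2)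

/-- The conjugate partition `λ'` of the shape of `Y`, read mod 2, as an element of `ℤ₂^p`. -/
def etaConj (p : ℕ) (Y : YoungDiagram) : Fin p → ZMod 2 :=
  fun α => ((Y.colLen (α : ℕ) : ℕ) : ZMod 2)

/-- The column sums `η_γ ∈ ℤ₂^p` of `γ ∈ M_{m×p}(ℤ₂)`. -/
def etaGamma (m p : ℕ) (γ : Matrix (Fin m) (Fin p) (ZMod 2)) : Fin p → ZMod 2 :=
  fun α => ∑ i : Fin m, γ i α

/-- Extension of a filling of the cells of `Y` by values in `{0,…,p-1}` to a total
function (with irrelevant junk value `p` outside the cells of `Y`). -/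
def cExt (p : ℕ) (Y : YoungDiagram) (C : ↥Y.cells → Fin p) : ℕ → ℕ → ℕ :=
  fun k l => if h : (k, l) ∈ Y.cells then (C ⟨(k, l), h⟩ : ℕ) else p

/-- The weight `μ_A`: `tabWeight Y A i` is the number of entries of `A` equal to `i`. -/
def tabWeight (Y : YoungDiagram) (A : ℕ → ℕ → ℕ) (i : ℕ) : ℕ :=
  (Y.cells.filter (fun c => A c.1 c.2 = i)).card

/-- Graded lexicographic order on weights in `ℕ^m`. -/
def WeightGLexLt (m : ℕ) (μ η : ℕ → ℕ) : Prop :=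
  (∑ i ∈ Finset.range m, μ i) < (∑ i ∈ Finset.range m, η i) ∨
  ((∑ i ∈ Finset.range m, μ i) = (∑ i ∈ Finset.range m, η i) ∧
    ∃ j < m, μ j < η j ∧ ∀ t < j, μ t = η t)

/-- The length of row `r` of the shape of the subtableau `A^k` (cells of `Y` whose
`A`-entry is `< k`, i.e. among the first `k` letters in 0-based labelling). -/
def subRowLen (Y : YoungDiagram) (A : ℕ → ℕ → ℕ) (k r : ℕ) : ℕ :=
  ((List.range (Y.rowLen r)).filter (fun l => A r l < k)).length

/-- Graded lexicographic comparison of the shapes of the subtableaux `A^k` and `B^k`. -/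
def SubShapeGLexLt (Y : YoungDiagram) (A : ℕ → ℕ → ℕ) (Z : YoungDiagram)
    (B : ℕ → ℕ → ℕ) (k : ℕ) : Prop :=
  (Y.cells.filter (fun c => A c.1 c.2 < k)).card
      < (Z.cells.filter (fun c => B c.1 c.2 < k)).card ∨
  ((Y.cells.filter (fun c => A c.1 c.2 < k)).card
      = (Z.cells.filter (fun c => B c.1 c.2 < k)).card ∧
    ∃ j, subRowLen Y A k j < subRowLen Z B k j ∧
      ∀ t < j, subRowLen Y A k t = subRowLen Z B k t)

/-- The total order on semistandard Young tableaux: `A < B` iff `μ_A < μ_B` in graded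
lex order, or `μ_A = μ_B` and there is `k ∈ {1,…,m}` with `shape(A^l) = shape(B^l)` for
all `l < k` and `shape(A^k) < shape(B^k)` in graded lex order. -/
def TabLt (m : ℕ) (Y : YoungDiagram) (A : ℕ → ℕ → ℕ) (Z : YoungDiagram)
    (B : ℕ → ℕ → ℕ) : Prop :=
  WeightGLexLt m (tabWeight Y A) (tabWeight Z B) ∨
  ((∀ i < m, tabWeight Y A i = tabWeight Z B i) ∧
    ∃ k, 1 ≤ k ∧ k ≤ m ∧ (∀ l < k, ∀ r, subRowLen Y A l r = subRowLen Z B l r) ∧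
      SubShapeGLexLt Y A Z B k)

/-- The index set for the basis of `P`: semistandard Young tableaux with entries in
`{0,…,m-1}` (normalized to `0` outside the diagram) whose shape has at most `p` columns. -/
def SSYTIdx (m p : ℕ) : Type :=
  {T : YoungDiagram × (ℕ → ℕ → ℕ) //
    IsSSYT T.1 T.2 ∧ EntriesBelow T.1 T.2 m ∧ T.1.rowLen 0 ≤ p ∧
      ∀ k l, (k, l) ∉ T.1 → T.2 k l = 0}

/-!
Apply to the hypothesis a functional that does not vanish on the unit `e_{D_λ}`: this gives
`θ_{A D_λ} = c • θ_{AC}` in the exterior algebra. Contracting successively with the coordinate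
functionals of the (distinct) factors of `θ_{A D_λ}` sends it to `1`, and sends `θ_{AC}` to `0`
unless each of these factors occurs in it; so every pair `(A(k,l), l)` is a pair
`(A(k',l'), C(k',l'))`. A cell with `C(k,l) ≠ l` minimising `(A(k,l), C(k,l))`
lexicographically is then impossible: row distinctness and the `A`-restriction handle
`C(k,l) < l`, and column strictness of `A` handles `C(k,l) > l`.
-/

namespace CliffordAlgebra

variable {R M κ : Type*} [CommRing R] [AddCommGroup M] [Module R M] {Q : QuadraticForm R M}

theorem contractLeft_prod_map_ι_eq_zero (d : Module.Dual R M) (v : κ → M) {l : List κ}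
    (hl : ∀ i ∈ l, d (v i) = 0) : contractLeft d (l.map fun i => ι Q (v i)).prod = 0 := by
  induction l with
  | nil => simp
  | cons i l ih =>
    rw [List.map_cons, List.prod_cons, contractLeft_ι_mul, hl i List.mem_cons_self, zero_smul,
      ih fun j hj => hl j (List.mem_cons_of_mem i hj), mul_zero, sub_zero]

def contractLeftList : List (Module.Dual R M) → CliffordAlgebra Q →ₗ[R] CliffordAlgebra Q
  | [] => LinearMap.id
  | d :: ds => contractLeftList ds ∘ₗ contractLeft d

theorem contractLeftList_eq_zero_of_mem {ds : List (Module.Dual R M)} {d : Module.Dual R M}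
    (hd : d ∈ ds) {x : CliffordAlgebra Q} (hx : contractLeft d x = 0) :
    contractLeftList ds x = 0 := by
  induction ds generalizing x with
  | nil => cases hd
  | cons d' ds ih =>
    rw [contractLeftList, LinearMap.comp_apply]
    rcases List.mem_cons.mp hd with rfl | hd
    · rw [hx, map_zero]
    · exact ih hd (by rw [contractLeft_comm, hx, map_zero, neg_zero])

theorem contractLeftList_map_prod_map_ι [DecidableEq κ] (v : κ → M) (φ : κ → Module.Dual R M)
    {l : List κ} (hl : l.Nodup) (hφv : ∀ i ∈ l, ∀ j ∈ l, φ i (v j) = if i = j then 1 else 0) :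
    contractLeftList (l.map φ) (l.map fun i => ι Q (v i)).prod = 1 := by
  induction l with
  | nil => simp [contractLeftList]
  | cons i l ih =>
    obtain ⟨hil, hl⟩ := List.nodup_cons.mp hl
    have hφv' : ∀ j ∈ l, ∀ k ∈ l, φ j (v k) = if j = k then 1 else 0 := fun j hj k hk =>
      hφv j (List.mem_cons_of_mem i hj) k (List.mem_cons_of_mem i hk)
    have hkill : contractLeft (φ i) (l.map fun j => ι Q (v j)).prod = 0 :=
      contractLeft_prod_map_ι_eq_zero _ _ fun j hj => by
        rw [hφv i List.mem_cons_self j (List.mem_cons_of_mem i hj),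
          if_neg (ne_of_mem_of_not_mem hj hil).symm]
    rw [List.map_cons, List.map_cons, List.prod_cons, contractLeftList, LinearMap.comp_apply,
      contractLeft_ι_mul, hkill, hφv i List.mem_cons_self i List.mem_cons_self, if_pos rfl,
      one_smul, mul_zero, sub_zero, ih hl hφv']

end CliffordAlgebra

namespace ExteriorAlgebra

open CliffordAlgebra

variable {R M κ : Type*} [CommRing R] [Nontrivial R] [AddCommGroup M] [Module R M]

theorem subset_of_prod_map_ι_eq_smul [DecidableEq κ] (v : κ → M) (φ : κ → Module.Dual R M)
    {s : Set κ} (hφv : ∀ i ∈ s, ∀ j, φ i (v j) = if i = j then 1 else 0) {l l' : List κ}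
    (hls : ∀ i ∈ l, i ∈ s) (hl : l.Nodup) {c : R}
    (h : (l.map fun i => ι R (v i)).prod = c • (l'.map fun i => ι R (v i)).prod) : l ⊆ l' := by
  intro i hi
  by_contra hil'
  have hone := contractLeftList_map_prod_map_ι (Q := 0) v φ hl
    fun j hj k _ => hφv j (hls j hj) k
  have hzero : contractLeftList (l.map φ) (l'.map fun j => ι R (v j)).prod = 0 :=
    contractLeftList_eq_zero_of_mem (List.mem_map_of_mem hi) <|
      contractLeft_prod_map_ι_eq_zero _ _ fun j hj => by
        rw [hφv i (hls i hi) j, if_neg (ne_of_mem_of_not_mem hj hil').symm]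
  rw [h, map_smul, hzero, smul_zero] at hone
  exact zero_ne_one hone

end ExteriorAlgebra

theorem TensorProduct.exists_eq_smul_of_tmul_eq {K V W : Type*} [Field K] [AddCommGroup V]
    [Module K V] [AddCommGroup W] [Module K W] {a a' : V} {b b' : W} (hb' : b' ≠ 0)
    (h : a ⊗ₜ[K] b = a' ⊗ₜ[K] b') : ∃ c : K, a' = c • a := by
  obtain ⟨g, hg⟩ : ∃ g : Module.Dual K W, g b' ≠ 0 := by
    by_contra! hall
    exact hb' ((Module.forall_dual_apply_eq_zero_iff K b').mp hall)
  have hg_apply := congrArg ((TensorProduct.rid K V).toLinearMap ∘ₗ LinearMap.lTensor V g) h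
  simp only [LinearMap.comp_apply, LinearMap.lTensor_tmul, LinearEquiv.coe_coe,
    TensorProduct.rid_tmul] at hg_apply
  exact ⟨(g b')⁻¹ * g b, by rw [mul_smul, hg_apply, inv_smul_smul₀ hg]⟩

section Monomials

variable (m p : ℕ)

/-- `0` out of range, matching the junk value of `thetaN`. -/
def basisN (q : ℕ × ℕ) : Fin m × Fin p → ℂ :=
  if h : q.1 < m ∧ q.2 < p then Pi.single (⟨q.1, h.1⟩, ⟨q.2, h.2⟩) 1 else 0

def coordN (q : ℕ × ℕ) : Module.Dual ℂ (Fin m × Fin p → ℂ) :=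
  if h : q.1 < m ∧ q.2 < p then LinearMap.proj (⟨q.1, h.1⟩, ⟨q.2, h.2⟩) else 0

theorem thetaN_eq_ι_basisN (i α : ℕ) :
    thetaN m p i α = ExteriorAlgebra.ι ℂ (basisN m p (i, α)) := by
  unfold thetaN basisN θv
  split_ifs <;> simp

theorem coordN_basisN {q : ℕ × ℕ} (hq : q.1 < m ∧ q.2 < p) (r : ℕ × ℕ) :
    coordN m p q (basisN m p r) = if q = r then 1 else 0 := by
  unfold coordN basisN
  rw [dif_pos hq]
  by_cases hr : r.1 < m ∧ r.2 < p
  · rw [dif_pos hr]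
    simp [Pi.single_apply, Prod.ext_iff]
  · rw [dif_neg hr, map_zero, if_neg (by rintro rfl; exact hr hq)]

theorem eNat_mul_self {α : ℕ} (hα : α < p) : eNat p α * eNat p α = 1 := by
  have hQ : Qcl p (Pi.single (⟨α, hα⟩ : Fin p) 1) = 1 := by
    simp [Qcl, QuadraticMap.weightedSumSquares_apply, Pi.single_apply]
  rw [eNat, dif_pos hα, ev, CliffordAlgebra.ι_sq_scalar, hQ, map_one]

end Monomials

section ReadingWord

def readingCells (Y : YoungDiagram) : List (ℕ × ℕ) :=
  (List.range (nRows Y)).flatMap fun k => (List.range (Y.rowLen k)).map (Prod.mk k)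

theorem mem_readingCells {Y : YoungDiagram} {c : ℕ × ℕ} : c ∈ readingCells Y ↔ c ∈ Y := by
  obtain ⟨k, l⟩ := c
  simp only [readingCells, List.mem_flatMap, List.mem_map, List.mem_range, Prod.mk.injEq]
  constructor
  · rintro ⟨k, -, l, hl, rfl, rfl⟩
    exact YoungDiagram.mem_iff_lt_rowLen.mpr hl
  · intro h
    exact ⟨k, YoungDiagram.mem_iff_lt_colLen.mp (Y.up_left_mem le_rfl (Nat.zero_le l) h),
      l, YoungDiagram.mem_iff_lt_rowLen.mp h, rfl, rfl⟩

theorem nodup_readingCells (Y : YoungDiagram) : (readingCells Y).Nodup := by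
  refine List.nodup_flatMap.mpr ⟨fun k _ => (List.nodup_range).map (Prod.mk_right_injective k),
    List.nodup_range.pairwise_of_forall_ne fun k _ k' _ hkk' => ?_⟩
  simp only [Function.onFun, List.disjoint_left, List.mem_map]
  rintro _ ⟨l, -, rfl⟩ ⟨l', -, hl'⟩
  exact hkk' (congrArg Prod.fst hl').symm

theorem prod_rows_eq_prod_readingCells {α : Type*} [Monoid α] (Y : YoungDiagram)
    (f : ℕ → ℕ → α) :
    ((List.range (nRows Y)).map fun k => ((List.range (Y.rowLen k)).map (f k)).prod).prod
      = ((readingCells Y).map fun c => f c.1 c.2).prod := by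
  simp [readingCells, List.flatMap_def, List.prod_flatten, Function.comp_def]

def entryPairs (Y : YoungDiagram) (A G : ℕ → ℕ → ℕ) : List (ℕ × ℕ) :=
  (readingCells Y).map fun c => (A c.1 c.2, G c.1 c.2)

theorem mem_entryPairs {Y : YoungDiagram} {A G : ℕ → ℕ → ℕ} {q : ℕ × ℕ} :
    q ∈ entryPairs Y A G ↔ ∃ k l, (k, l) ∈ Y ∧ (A k l, G k l) = q := by
  simp [entryPairs, mem_readingCells]

theorem thetaTab_eq_prod_entryPairs (m p : ℕ) (Y : YoungDiagram) (A G : ℕ → ℕ → ℕ) :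
    thetaTab m p Y A G
      = ((entryPairs Y A G).map fun q => ExteriorAlgebra.ι ℂ (basisN m p q)).prod := by
  rw [thetaTab, prod_rows_eq_prod_readingCells, entryPairs, List.map_map]
  simp only [Function.comp_def, thetaN_eq_ι_basisN]

theorem isUnit_eTab (p : ℕ) (Y : YoungDiagram) (G : ℕ → ℕ → ℕ)
    (hG : ∀ k l, (k, l) ∈ Y → G k l < p) : IsUnit (eTab p Y G) := by
  rw [eTab, prod_rows_eq_prod_readingCells]
  refine List.prod_isUnit fun x hx => ?_
  obtain ⟨⟨k, l⟩, hkl, rfl⟩ := List.mem_map.mp hx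
  have hsq := eNat_mul_self p (hG k l (mem_readingCells.mp hkl))
  exact (⟨_, _, hsq, hsq⟩ : (Cl p)ˣ).isUnit

end ReadingWord

section Combinatorics

variable {p : ℕ} {Y : YoungDiagram} {A C : ℕ → ℕ → ℕ}

theorem IsSSYT.eq_of_mem_of_eq (hA : IsSSYT Y A) {k k' l : ℕ} (hk : (k, l) ∈ Y)
    (hk' : (k', l) ∈ Y) (h : A k l = A k' l) : k = k' := by
  rcases lt_trichotomy k k' with hlt | heq | hgt
  · exact absurd h (hA.2 k k' l hk' hlt).ne
  · exact heq
  · exact absurd h (hA.2 k' k l hk hgt).ne'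

theorem IsSSYT.nodup_entryPairs_col (hA : IsSSYT Y A) :
    (entryPairs Y A fun _ l => l).Nodup := by
  refine (nodup_readingCells Y).map_on fun c hc c' hc' h => ?_
  obtain ⟨hAeq, hl⟩ := Prod.ext_iff.mp h
  obtain ⟨k, l⟩ := c
  obtain ⟨k', l'⟩ := c'
  dsimp only at hAeq hl
  subst hl
  rw [hA.eq_of_mem_of_eq (mem_readingCells.mp hc) (mem_readingCells.mp hc') hAeq]

theorem IsARestricted.exists_lex_lt_of_ne (hA : IsSSYT Y A) (hC : IsARestricted p Y A C)
    (hcov : ∀ k l, (k, l) ∈ Y → ∃ k' l', (k', l') ∈ Y ∧ A k' l' = A k l ∧ C k' l' = l)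
    {k l : ℕ} (hkl : (k, l) ∈ Y) (hne : C k l ≠ l) :
    ∃ k' l', (k', l') ∈ Y ∧ C k' l' ≠ l' ∧
      toLex (A k' l', C k' l') < toLex (A k l, C k l) := by
  rcases hne.lt_or_gt with hlt | hgt
  · have hmem : (k, C k l) ∈ Y := Y.up_left_mem le_rfl hlt.le hkl
    rcases (hA.1 k (C k l) l hkl hlt.le).lt_or_eq with hA_lt | hA_eq
    · exact ⟨k, C k l, hmem, hC.1 k (C k l) l hmem hkl hlt.ne,
        Prod.Lex.toLex_lt_toLex.mpr (Or.inl hA_lt)⟩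
    · have hC_lt := hC.2.2.2 k (C k l) l hkl hlt hA_eq
      exact ⟨k, C k l, hmem, hC_lt.ne, Prod.Lex.toLex_lt_toLex.mpr (Or.inr ⟨hA_eq, hC_lt⟩)⟩
  · obtain ⟨k', l', hmem, hA_eq, hC_eq⟩ := hcov k l hkl
    refine ⟨k', l', hmem, fun hdiag => ?_,
      Prod.Lex.toLex_lt_toLex.mpr (Or.inr ⟨hA_eq, hC_eq ▸ hgt⟩)⟩
    obtain rfl : l' = l := hdiag.symm.trans hC_eq
    obtain rfl : k' = k := hA.eq_of_mem_of_eq hmem hkl hA_eq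
    exact hne hdiag

theorem IsARestricted.eq_col_of_forall_exists (hA : IsSSYT Y A) (hC : IsARestricted p Y A C)
    (hcov : ∀ k l, (k, l) ∈ Y → ∃ k' l', (k', l') ∈ Y ∧ A k' l' = A k l ∧ C k' l' = l) :
    ∀ k l, (k, l) ∈ Y → C k l = l := by
  by_contra! hbad
  obtain ⟨k₀, l₀, hmem₀, hne₀⟩ := hbad
  let S := Y.cells.filter fun c => C c.1 c.2 ≠ c.2
  have hS_mem {k l : ℕ} : (k, l) ∈ S ↔ (k, l) ∈ Y ∧ C k l ≠ l := by
    simp [S]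
  obtain ⟨⟨k, l⟩, hkl, hmin⟩ := S.exists_min_image (fun c => toLex (A c.1 c.2, C c.1 c.2))
    ⟨_, hS_mem.mpr ⟨hmem₀, hne₀⟩⟩
  obtain ⟨k', l', hmem, hne, hlt⟩ := hC.exists_lex_lt_of_ne hA hcov (hS_mem.mp hkl).1
    (hS_mem.mp hkl).2
  exact (hmin (k', l') (hS_mem.mpr ⟨hmem, hne⟩)).not_gt hlt

end Combinatorics

theorem A_restricted_leading_unique_general (m p : ℕ)
    (Y : YoungDiagram) (A : ℕ → ℕ → ℕ)
    (hA : IsSSYT Y A) (hAm : EntriesBelow Y A m) (hcol : Y.rowLen 0 ≤ p)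
    (C : ℕ → ℕ → ℕ) (hC : IsARestricted p Y A C)
    (ε : ℂ) (hε : ε = 1 ∨ ε = -1)
    (heq : thetaTab m p Y A C ⊗ₜ[ℂ] eTab p Y C
        = ε • (thetaTab m p Y A (fun _ l => l) ⊗ₜ[ℂ] eTab p Y (fun _ l => l))) :
    ∀ k l, (k, l) ∈ Y → C k l = l := by
  have hD_lt : ∀ k l, (k, l) ∈ Y → l < p := fun k l hkl =>
    (YoungDiagram.mem_iff_lt_rowLen.mp hkl).trans_le ((Y.rowLen_anti 0 k k.zero_le).trans hcol)
  have hε0 : ε ≠ 0 := by rcases hε with rfl | rfl <;> norm_num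
  obtain ⟨c, hc⟩ := TensorProduct.exists_eq_smul_of_tmul_eq
    (smul_ne_zero hε0 (isUnit_eTab p Y _ hD_lt).ne_zero)
    (heq.trans (TensorProduct.tmul_smul ε _ _).symm)
  rw [thetaTab_eq_prod_entryPairs, thetaTab_eq_prod_entryPairs] at hc
  have hsub := ExteriorAlgebra.subset_of_prod_map_ι_eq_smul (basisN m p) (coordN m p)
    (s := {q | q.1 < m ∧ q.2 < p}) (fun q hq r => coordN_basisN m p hq r)
    (fun q hq => by
      obtain ⟨k, l, hkl, rfl⟩ := mem_entryPairs.mp hq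
      exact ⟨hAm (k, l) ((YoungDiagram.mem_cells _).mpr hkl), hD_lt k l hkl⟩)
    hA.nodup_entryPairs_col hc
  refine hC.eq_col_of_forall_exists hA fun k l hkl => ?_
  obtain ⟨k', l', hmem, hpair⟩ := mem_entryPairs.mp (hsub (mem_entryPairs.mpr ⟨k, l, hkl, rfl⟩))
  exact ⟨k', l', hmem, congrArg Prod.fst hpair, congrArg Prod.snd hpair⟩

/-- If `C ∈ 𝕋_A` satisfies `θ_{AC} ⊗ e_C = ± θ_{A D_λ} ⊗ e_{D_λ}`,
then `C = D_λ` (on the cells of `λ`), where `D_λ(k,l) = l`. -/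
theorem A_restricted_leading_unique (m p : ℕ) (hm : 0 < m) (hp : 0 < p)
    (Y : YoungDiagram) (A : ℕ → ℕ → ℕ)
    (hA : IsSSYT Y A) (hAm : EntriesBelow Y A m) (hcol : Y.rowLen 0 ≤ p)
    (C : ℕ → ℕ → ℕ) (hC : IsARestricted p Y A C)
    (ε : ℂ) (hε : ε = 1 ∨ ε = -1)
    (heq : thetaTab m p Y A C ⊗ₜ[ℂ] eTab p Y C
        = ε • (thetaTab m p Y A (fun _ l => l) ⊗ₜ[ℂ] eTab p Y (fun _ l => l))) :
    ∀ k l, (k, l) ∈ Y → C k l = l :=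
  A_restricted_leading_unique_general m p Y A hA hAm hcol C hC ε hε heq

end
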